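/- If σ = Ψ(π) with Ψ as in the descent-to-weak-excedance bijection, then (21-3)π + (3-21)π - C(des(π),2) = A_EN(σ). -/

import Mathlib

open Finset


def wexB {n : ℕ} (π : Equiv.Perm (Fin n)) : Finset (Fin n) :=
  Finset.univ.filter (fun i => i ≤ π i)

def wex {n : ℕ} (π : Equiv.Perm (Fin n)) : ℕ := (wexB π).card

def wexbotsum {n : ℕ} (π : Equiv.Perm (Fin n)) : ℕ := ∑ i ∈ wexB π, (i.val + 1)

def wextopsum {n : ℕ} (π : Equiv.Perm (Fin n)) : ℕ := ∑ i ∈ wexB π, ((π i).val + 1)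

def wexbotsSet {n : ℕ} (π : Equiv.Perm (Fin n)) : Finset ℕ :=
  (wexB π).image (fun i => i.val + 1)

def wextopsSet {n : ℕ} (π : Equiv.Perm (Fin n)) : Finset ℕ :=
  (wexB π).image (fun i => (π i).val + 1)

/-- `A_EE`: pairs `(i,j)` with `j < i ≤ π i < π j`. -/
def AEE {n : ℕ} (π : Equiv.Perm (Fin n)) : ℕ :=
  (Finset.univ.filter (fun p : Fin n × Fin n =>
    p.2 < p.1 ∧ p.1 ≤ π p.1 ∧ π p.1 < π p.2)).card

/-- `A_NN`: pairs `(i,j)` with `π j < π i < i < j`. -/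
def ANN {n : ℕ} (π : Equiv.Perm (Fin n)) : ℕ :=
  (Finset.univ.filter (fun p : Fin n × Fin n =>
    π p.2 < π p.1 ∧ π p.1 < p.1 ∧ p.1 < p.2)).card

/-- `A_EN`: pairs `(i,j)` with `j ≤ π j < π i < i`. -/
def AEN {n : ℕ} (π : Equiv.Perm (Fin n)) : ℕ :=
  (Finset.univ.filter (fun p : Fin n × Fin n =>
    p.2 ≤ π p.2 ∧ π p.2 < π p.1 ∧ π p.1 < p.1)).card

/-- `A_NE`: pairs `(i,j)` with `π i < i < j ≤ π j`. -/
def ANE {n : ℕ} (π : Equiv.Perm (Fin n)) : ℕ :=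
  (Finset.univ.filter (fun p : Fin n × Fin n =>
    π p.1 < p.1 ∧ p.1 < p.2 ∧ p.2 ≤ π p.2)).card

/-- `C_EE`: pairs `(i,j)` with `j < i ≤ π j < π i`. -/
def CEE {n : ℕ} (π : Equiv.Perm (Fin n)) : ℕ :=
  (Finset.univ.filter (fun p : Fin n × Fin n =>
    p.2 < p.1 ∧ p.1 ≤ π p.2 ∧ π p.2 < π p.1)).card

/-- `C_NN`: pairs `(i,j)` with `π i < π j < i < j`. -/
def CNN {n : ℕ} (π : Equiv.Perm (Fin n)) : ℕ :=
  (Finset.univ.filter (fun p : Fin n × Fin n =>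
    π p.1 < π p.2 ∧ π p.2 < p.1 ∧ p.1 < p.2)).card

def descents {n : ℕ} (π : Equiv.Perm (Fin n)) : Finset (Fin n) :=
  Finset.univ.filter (fun i => ∃ h : i.val + 1 < n, π ⟨i.val + 1, h⟩ < π i)

def des {n : ℕ} (π : Equiv.Perm (Fin n)) : ℕ := (descents π).card

def destopsum {n : ℕ} (π : Equiv.Perm (Fin n)) : ℕ :=
  ∑ i ∈ descents π, ((π i).val + 1)

def desbotsum {n : ℕ} (π : Equiv.Perm (Fin n)) : ℕ :=
  ∑ i ∈ descents π, (if h : i.val + 1 < n then (π ⟨i.val + 1, h⟩).val + 1 else 0)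

def destopsSet {n : ℕ} (π : Equiv.Perm (Fin n)) : Finset ℕ :=
  (descents π).image (fun i => (π i).val + 1)

def desbotsSet {n : ℕ} (π : Equiv.Perm (Fin n)) : Finset ℕ :=
  (descents π).image
    (fun i => if h : i.val + 1 < n then (π ⟨i.val + 1, h⟩).val + 1 else 0)

def maj {n : ℕ} (π : Equiv.Perm (Fin n)) : ℕ := ∑ i ∈ descents π, (i.val + 1)

/-- Occurrences of the generalized pattern `(2-31)`. -/
def P2d31 {n : ℕ} (π : Equiv.Perm (Fin n)) : ℕ :=
  (Finset.univ.filter (fun p : Fin n × Fin n =>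
    p.1 < p.2 ∧ ∃ h : p.2.val + 1 < n,
      π ⟨p.2.val + 1, h⟩ < π p.1 ∧ π p.1 < π p.2)).card

/-- Occurrences of the generalized pattern `(31-2)`. -/
def P31d2 {n : ℕ} (π : Equiv.Perm (Fin n)) : ℕ :=
  (Finset.univ.filter (fun p : Fin n × Fin n =>
    ∃ h : p.1.val + 1 < n, π ⟨p.1.val + 1, h⟩ < π p.1 ∧ p.1.val + 1 < p.2.val ∧
      π ⟨p.1.val + 1, h⟩ < π p.2 ∧ π p.2 < π p.1)).card

/-- Occurrences of the generalized pattern `(21-3)`. -/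
def P21d3 {n : ℕ} (π : Equiv.Perm (Fin n)) : ℕ :=
  (Finset.univ.filter (fun p : Fin n × Fin n =>
    ∃ h : p.1.val + 1 < n, π ⟨p.1.val + 1, h⟩ < π p.1 ∧ p.1.val + 1 < p.2.val ∧
      π p.1 < π p.2)).card

/-- Occurrences of the generalized pattern `(3-21)`. -/
def P3d21 {n : ℕ} (π : Equiv.Perm (Fin n)) : ℕ :=
  (Finset.univ.filter (fun p : Fin n × Fin n =>
    p.1 < p.2 ∧ ∃ h : p.2.val + 1 < n,
      π ⟨p.2.val + 1, h⟩ < π p.2 ∧ π p.2 < π p.1)).card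

/-- Occurrences of the generalized pattern `(1-32)`. -/
def P1d32 {n : ℕ} (π : Equiv.Perm (Fin n)) : ℕ :=
  (Finset.univ.filter (fun p : Fin n × Fin n =>
    p.1 < p.2 ∧ ∃ h : p.2.val + 1 < n,
      π ⟨p.2.val + 1, h⟩ < π p.2 ∧ π p.1 < π ⟨p.2.val + 1, h⟩)).card

/-- Occurrences of the generalized pattern `(32-1)`. -/
def P32d1 {n : ℕ} (π : Equiv.Perm (Fin n)) : ℕ :=
  (Finset.univ.filter (fun p : Fin n × Fin n =>
    ∃ h : p.1.val + 1 < n, π ⟨p.1.val + 1, h⟩ < π p.1 ∧ p.1.val + 1 < p.2.val ∧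
      π p.2 < π ⟨p.1.val + 1, h⟩)).card


/-- A permutation tableau with `n-k` columns, encoded as a `{0,1,2}`-filling of the full
`k × m` rectangle: the `2`'s are the boxes outside the Young diagram (southeast corner). -/
def IsPermTableau {k m : ℕ} (T : Fin k → Fin m → Fin 3) : Prop :=
  (∀ j : Fin m, ∃ i : Fin k, T i j = 1) ∧
  (∀ (i : Fin k) (j : Fin m), T i j ≠ 2 →
    ∀ (i' : Fin k) (j' : Fin m), i' ≤ i → j' ≤ j → T i' j' ≠ 2) ∧
  (∀ (i : Fin k) (j : Fin m), T i j = 0 →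
    ¬ ((∃ i' < i, T i' j = 1) ∧ (∃ j' < j, T i j' = 1)))

def rowLen {k m : ℕ} (T : Fin k → Fin m → Fin 3) (i : Fin k) : ℕ :=
  (Finset.univ.filter (fun j => T i j ≠ 2)).card

def zerosT {k m : ℕ} (T : Fin k → Fin m → Fin 3) : ℕ :=
  ∑ i, (Finset.univ.filter (fun j => T i j = 0)).card

def onesT {k m : ℕ} (T : Fin k → Fin m → Fin 3) : ℕ :=
  ∑ i, (Finset.univ.filter (fun j => T i j = 1)).card

def twosT {k m : ℕ} (T : Fin k → Fin m → Fin 3) : ℕ :=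
  ∑ i, (Finset.univ.filter (fun j => T i j = 2)).card

/-- A valid `0/1`-filling of the Young diagram with row lengths `lam`. -/
def ValidFilling {k : ℕ} (lam : Fin k → ℕ) (F : ∀ i : Fin k, Fin (lam i) → Bool) : Prop :=
  (∀ (i : Fin k) (j : Fin (lam i)), ∃ (i' : Fin k) (h : (j : ℕ) < lam i'), F i' ⟨j, h⟩ = true) ∧
  (∀ (i : Fin k) (j : Fin (lam i)), F i j = false →
    ¬ ((∃ (i' : Fin k) (h : (j : ℕ) < lam i'), i' < i ∧ F i' ⟨j, h⟩ = true) ∧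
       (∃ j' : Fin (lam i), j' < j ∧ F i j' = true)))

def fillZeros {k : ℕ} {lam : Fin k → ℕ} (F : ∀ i : Fin k, Fin (lam i) → Bool) : ℕ :=
  ∑ i, (Finset.univ.filter (fun j => F i j = false)).card

def fillOnes {k : ℕ} {lam : Fin k → ℕ} (F : ∀ i : Fin k, Fin (lam i) → Bool) : ℕ :=
  ∑ i, (Finset.univ.filter (fun j => F i j = true)).card

open Classical in
/-- `F_λ(p,q)`, evaluated at integers `p`, `q`: the sum over valid fillings of
`p ^ (#0's) * q ^ (#1's)`. -/
noncomputable def Fval {k : ℕ} (lam : Fin k → ℕ) (p q : ℤ) : ℤ :=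
  ∑ F ∈ Finset.univ.filter
      (fun F : ∀ i : Fin k, Fin (lam i) → Bool => ValidFilling lam F),
    p ^ fillZeros F * q ^ fillOnes F


/-!
Both sides equal `∑_{d descent} (n - 1 - π d) - C(des π, 2)`.

For `π`: an occurrence of `(21-3)` or `(3-21)` whose descent sits at `d` is a value larger than
the descent top `π d`, placed right of `d + 1` or left of `d`; positions `d` and `d + 1` themselves
carry values `≤ π d`, so each descent contributes exactly `n - 1 - π d`.

For `σ`: `(i, j) ↦ (σ j, σ i)` identifies `A_EN(σ)` with the pairs of values `a < b` where `a` is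
a weak excedance top and `b` is not. Counting all `b > a` instead overcounts by the
`C(wex σ, 2)` pairs of weak excedance tops, giving `A_EN(σ) + C(wex σ, 2) = ∑_a (n - a)`
(tops taken `1`-based). The hypothesis makes the tops `n` together with the descent tops of `π`,
shifted down by one, so `wex σ = des π + 1` and the sum becomes `∑_d (n - π d)`.
-/

lemma card_filter_prod_eq_sum_fst {α β : Type*} [Fintype α] [Fintype β]
    (P : α × β → Prop) [DecidablePred P] :
    #{p : α × β | P p} = ∑ a, #{b | P (a, b)} := by
  rw [card_filter, ← univ_product_univ, sum_product]
  exact sum_congr rfl fun a _ => (card_filter _ _).symm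

lemma card_filter_prod_eq_sum_snd {α β : Type*} [Fintype α] [Fintype β]
    (P : α × β → Prop) [DecidablePred P] :
    #{p : α × β | P p} = ∑ b, #{a | P (a, b)} := by
  rw [card_filter, ← univ_product_univ, sum_product_right]
  exact sum_congr rfl fun b _ => (card_filter _ _).symm

lemma card_filter_lt_product_compl_add_choose {α : Type*} [Fintype α] [LinearOrder α]
    (T : Finset α) :
    #{x ∈ T ×ˢ Tᶜ | x.1 < x.2} + (#T).choose 2 = ∑ t ∈ T, #{v | t < v} := by
  have hdisj : Disjoint {x ∈ T ×ˢ Tᶜ | x.1 < x.2} {x ∈ T ×ˢ T | x.1 < x.2} :=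
    disjoint_filter_filter (disjoint_product.mpr (Or.inr disjoint_compl_left))
  rw [← card_product_filter_lt, ← card_union_of_disjoint hdisj, ← filter_union,
    ← product_union, union_comm, union_compl, card_filter, sum_product]
  exact sum_congr rfl fun t _ => (card_filter _ _).symm

section Descents

variable {n : ℕ} (π : Equiv.Perm (Fin n))

lemma P21d3_eq_sum_descents :
    P21d3 π = ∑ d ∈ descents π, #{j : Fin n | d.val + 1 < j.val ∧ π d < π j} := by
  rw [P21d3, card_filter_prod_eq_sum_fst, descents, sum_filter]
  refine sum_congr rfl fun d _ => ?_
  split_ifs with hd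
  · obtain ⟨h, hlt⟩ := hd
    simp [h, hlt]
  · simp only [card_eq_zero, filter_eq_empty_iff]
    exact fun j _ ⟨h, hlt, _⟩ => hd ⟨h, hlt⟩

lemma P3d21_eq_sum_descents :
    P3d21 π = ∑ d ∈ descents π, #{i : Fin n | i < d ∧ π d < π i} := by
  rw [P3d21, card_filter_prod_eq_sum_snd, descents, sum_filter]
  refine sum_congr rfl fun d _ => ?_
  split_ifs with hd
  · obtain ⟨h, hlt⟩ := hd
    simp [h, hlt]
  · simp only [card_eq_zero, filter_eq_empty_iff]
    exact fun i _ ⟨_, h, hlt, _⟩ => hd ⟨h, hlt⟩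

lemma card_filter_apply_gt (a : Fin n) : #{x : Fin n | a < π x} = n - 1 - a := by
  rw [← Fin.card_Ioi, ← filter_lt_eq_Ioi]
  exact card_equiv π (by simp)

lemma card_above_descent_right_add_left {d : Fin n} (hd : d ∈ descents π) :
    #{j : Fin n | d.val + 1 < j.val ∧ π d < π j} + #{i : Fin n | i < d ∧ π d < π i}
      = n - 1 - π d := by
  obtain ⟨h, hlt⟩ := (mem_filter.mp hd).2
  rw [← card_filter_apply_gt, ← card_union_of_disjoint]
  · congr 1
    ext x
    simp only [mem_union, mem_filter, mem_univ, true_and]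
    constructor
    · rintro (⟨-, hx⟩ | ⟨-, hx⟩) <;> exact hx
    · intro hx
      have hne : x.val ≠ d.val := fun e => (Fin.ext e ▸ hx).false
      have hne' : x.val ≠ d.val + 1 := fun e =>
        lt_asymm ((show x = ⟨d.val + 1, h⟩ from Fin.ext e) ▸ hx) hlt
      rcases lt_or_gt_of_ne hne with hlt' | hgt
      · exact Or.inr ⟨hlt', hx⟩
      · exact Or.inl ⟨by omega, hx⟩
  · rw [disjoint_filter]
    intro x _ hx hx'
    rw [Fin.lt_def] at hx'
    omega

lemma P21d3_add_P3d21 :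
    P21d3 π + P3d21 π = ∑ d ∈ descents π, (n - 1 - (π d).val) := by
  rw [P21d3_eq_sum_descents, P3d21_eq_sum_descents, ← sum_add_distrib]
  exact sum_congr rfl fun d hd => card_above_descent_right_add_left π hd

lemma destopsSet_image_pred :
    (destopsSet π).image (· - 1) = (descents π).image (fun d => (π d).val) := by
  rw [destopsSet, image_image]
  rfl

end Descents

section WeakExcedances

variable {n : ℕ} (σ : Equiv.Perm (Fin n))

lemma wex_eq_card_wextopsSet : wex σ = #(wextopsSet σ) :=
  (card_image_of_injective _ fun _ _ h => σ.injective (Fin.ext (Nat.succ_injective h))).symm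

lemma AEN_eq_card_wex_values_pairs :
    AEN σ = #{x ∈ (wexB σ).image σ ×ˢ ((wexB σ).image σ)ᶜ | x.1 < x.2} := by
  refine card_equiv ((Equiv.prodComm _ _).trans (σ.prodCongr σ)) fun p => ?_
  simp only [wexB, mem_filter, mem_univ, true_and, Equiv.trans_apply, Equiv.prodComm_apply,
    Equiv.prodCongr_apply, mem_product, Prod.map_fst, Prod.fst_swap, mem_image,
    σ.injective.eq_iff, exists_eq_right, Prod.map_snd, Prod.snd_swap, mem_compl, not_le]
  tauto

lemma AEN_add_choose_wex :
    AEN σ + (wex σ).choose 2 = ∑ s ∈ wextopsSet σ, (n - s) := by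
  have hwex : wex σ = #((wexB σ).image σ) := (card_image_of_injective _ σ.injective).symm
  have htops : wextopsSet σ = ((wexB σ).image σ).image (fun t => t.val + 1) := by
    rw [wextopsSet, image_image]
    rfl
  rw [AEN_eq_card_wex_values_pairs, hwex, card_filter_lt_product_compl_add_choose, htops,
    sum_image (fun a _ b _ h => Fin.ext (Nat.succ_injective h))]
  refine sum_congr rfl fun t _ => ?_
  rw [filter_lt_eq_Ioi, Fin.card_Ioi]
  omega

end WeakExcedances

theorem patterns_eq_AEN_general (n : ℕ) (π σ : Equiv.Perm (Fin n))
    (h2 : wextopsSet σ = insert n ((destopsSet π).image (· - 1))) :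
    (P21d3 π : ℤ) + (P3d21 π : ℤ) - ((des π).choose 2 : ℤ) = (AEN σ : ℤ) := by
  have hinj : Set.InjOn (fun d => (π d).val) (descents π) :=
    fun a _ b _ h => π.injective (Fin.ext h)
  have hnotMem : n ∉ (descents π).image (fun d => (π d).val) := by
    simp only [mem_image, not_exists, not_and]
    exact fun d _ => (π d).isLt.ne
  have hwex : wex σ = des π + 1 := by
    rw [wex_eq_card_wextopsSet, h2, destopsSet_image_pred, card_insert_of_notMem hnotMem,
      card_image_of_injOn hinj, des]
  have hchoose : (des π + 1).choose 2 = des π + (des π).choose 2 :=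
    (Nat.choose_succ_succ' _ 1).trans (by rw [Nat.choose_one_right])
  have hAEN := AEN_add_choose_wex σ
  rw [h2, destopsSet_image_pred, sum_insert hnotMem, sum_image hinj, hwex, hchoose] at hAEN
  have hpat := P21d3_add_P3d21 π
  have hsplit : ∑ d ∈ descents π, (n - (π d).val)
      = ∑ d ∈ descents π, (n - 1 - (π d).val) + des π := by
    rw [des, card_eq_sum_ones, ← sum_add_distrib]
    exact sum_congr rfl fun d _ => by omega
  omega

theorem patterns_eq_AEN (n : ℕ) (hn : 1 ≤ n) (π σ : Equiv.Perm (Fin n))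
    (h1 : wexbotsSet σ = insert 1 ((desbotsSet π).image (· + 1)))
    (h2 : wextopsSet σ = insert n ((destopsSet π).image (· - 1))) :
    (P21d3 π : ℤ) + (P3d21 π : ℤ) - ((des π).choose 2 : ℤ) = (AEN σ : ℤ) :=
  patterns_eq_AEN_general n π σ h2
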